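/- arXiv:1808.04020 — 2 statements merged into one kernel-verified Lean document; each statement's English description precedes it below -/
import Mathlib

section
/- Let F be a probability distribution on [θ̲, θ̄] with mean E[F], and let (c̃(N))_{N≥2} satisfy θ̲ < limsup_{N→∞} c̃(N) < E[F]. Then for every ε > 0 there exists N₀ such that for all N ≥ N₀, sup_{θ ∈ [θ̲,θ̄]} F^{*(N-1)}(N·c̃(N) - θ) ≤ F^{*(N-1)}(N·c̃(N) - θ̲) < ε. In particular the ex-post efficiency rule is incentive compatible for all sufficiently large N for any fixed news-utility parameters. -/
open Set MeasureTheory Filter ProbabilityTheory Topology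

/-!
The sum of `n` i.i.d. draws from `F` has mean `n E[F]` and variance `n Var[F]`. Eventually
`c̃(N) < r` for some `r < E[F]`, so the threshold `N c̃(N) - θ̲` lies below `n m` (`n = N - 1`)
for a fixed `m < E[F]`, and Chebyshev's inequality bounds `F^{*n}` there by
`Var[F] / (n (E[F] - m)²) → 0`. The first inequality is just monotonicity of a c.d.f.
Mathlib's `limsup` of a sequence unbounded above is `0`, so `0 ≤ θ̲ < limsup c̃` is what makes
`c̃` bounded above.
-/

lemma Real.isBoundedUnder_le_of_limsup_ne_zero {α : Type*} {f : Filter α} {u : α → ℝ}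
    (h : limsup u f ≠ 0) : IsBoundedUnder (· ≤ ·) f u :=
  not_not.1 (mt Real.limsup_of_not_isBoundedUnder h)

namespace ProbabilityTheory

lemma cdf_le_variance_div_sq {ν : Measure ℝ} [IsProbabilityMeasure ν] (h : MemLp id 2 ν)
    {x : ℝ} (hx : x < ∫ θ, θ ∂ν) : cdf ν x ≤ Var[id; ν] / ((∫ θ, θ ∂ν) - x) ^ 2 := by
  have hpos : 0 < (∫ θ, θ ∂ν) - x := sub_pos.2 hx
  have hsub : Iic x ⊆ {θ | ν[id] - x ≤ |id θ - ν[id]|} := fun θ (hθ : θ ≤ x) => by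
    rw [mem_ofPred_eq, abs_sub_comm]
    exact (sub_le_sub_left hθ _).trans (le_abs_self _)
  rw [cdf_eq_real]
  exact ENNReal.toReal_le_of_le_ofReal (div_nonneg (variance_nonneg _ _) (sq_nonneg _))
    ((measure_mono hsub).trans (meas_ge_le_variance_div_sq h hpos))

/-- The convolution power `μ^{*n}`, as the law of the sum of `n` independent `μ`-draws. -/
noncomputable def iidSumLaw (μ : Measure ℝ) (n : ℕ) : Measure ℝ :=
  (Measure.pi fun _ : Fin n => μ).map fun ω => ∑ i, ω i

section iidSumLaw

variable {μ : Measure ℝ} [IsProbabilityMeasure μ] {n : ℕ}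

lemma measurable_sum_eval : Measurable fun ω : Fin n → ℝ => ∑ i, ω i := by
  fun_prop

instance : IsProbabilityMeasure (iidSumLaw μ n) :=
  Measure.isProbabilityMeasure_map measurable_sum_eval.aemeasurable

lemma memLp_id_iidSumLaw (h : MemLp id 2 μ) : MemLp id 2 (iidSumLaw μ n) := by
  rw [iidSumLaw, memLp_map_measure_iff aestronglyMeasurable_id measurable_sum_eval.aemeasurable]
  exact memLp_finsetSum (f := fun i (ω : Fin n → ℝ) => ω i) Finset.univ fun i _ =>
    h.comp_measurePreserving (measurePreserving_eval (fun _ => μ) i)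

lemma integral_id_iidSumLaw (h : Integrable id μ) :
    ∫ θ, θ ∂iidSumLaw μ n = n * ∫ θ, θ ∂μ := by
  rw [iidSumLaw, integral_map (f := fun θ : ℝ => θ) measurable_sum_eval.aemeasurable
      aestronglyMeasurable_id,
    integral_finsetSum (f := fun i (ω : Fin n → ℝ) => ω i) _ fun i _ => integrable_eval h]
  simp [integral_eval]

lemma variance_id_iidSumLaw (h : MemLp id 2 μ) :
    Var[id; iidSumLaw μ n] = n * Var[id; μ] := by
  rw [iidSumLaw, variance_id_map measurable_sum_eval.aemeasurable]
  have := variance_sum_pi (μ := fun _ : Fin n => μ) (X := fun _ => id) fun _ => h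
  simp only [Finset.sum_const, Finset.card_univ, Fintype.card_fin, nsmul_eq_mul] at this
  rw [← this]
  congr 1
  ext ω
  simp

lemma tendsto_cdf_iidSumLaw (h : MemLp id 2 μ)
    {m : ℝ} (hm : m < ∫ θ, θ ∂μ) {x : ℕ → ℝ} (hx : ∀ᶠ n in atTop, x n ≤ n * m) :
    Tendsto (fun n => cdf (iidSumLaw μ n) (x n)) atTop (𝓝 0) := by
  set E := ∫ θ, θ ∂μ
  have hgap : 0 < E - m := sub_pos.2 hm
  have hbound : ∀ᶠ n : ℕ in atTop,
      cdf (iidSumLaw μ n) (x n) ≤ Var[id; μ] / (E - m) ^ 2 * (n : ℝ)⁻¹ := by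
    filter_upwards [hx, eventually_gt_atTop 0] with n hxn hn
    have hn' : (0 : ℝ) < n := Nat.cast_pos.2 hn
    have hsep : n * (E - m) ≤ n * E - x n := by linarith
    have hmean : x n < ∫ θ, θ ∂iidSumLaw μ n := by
      rw [integral_id_iidSumLaw (h.integrable one_le_two)]
      linarith [mul_pos hn' hgap]
    calc cdf (iidSumLaw μ n) (x n)
        ≤ Var[id; iidSumLaw μ n] / ((∫ θ, θ ∂iidSumLaw μ n) - x n) ^ 2 :=
          cdf_le_variance_div_sq (memLp_id_iidSumLaw h) hmean
      _ = n * Var[id; μ] / (n * E - x n) ^ 2 := by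
          rw [variance_id_iidSumLaw h, integral_id_iidSumLaw (h.integrable one_le_two)]
      _ ≤ n * Var[id; μ] / (n * (E - m)) ^ 2 := by
          have := variance_nonneg id μ
          gcongr
      _ = Var[id; μ] / (E - m) ^ 2 * (n : ℝ)⁻¹ := by
          field_simp
  have hlim : Tendsto (fun n : ℕ => Var[id; μ] / (E - m) ^ 2 * (n : ℝ)⁻¹) atTop (𝓝 0) := by
    simpa using (tendsto_inv_atTop_zero.comp tendsto_natCast_atTop_atTop).const_mul
      (Var[id; μ] / (E - m) ^ 2)
  exact squeeze_zero' (Eventually.of_forall fun n => cdf_nonneg _ _) hbound hlim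

end iidSumLaw

end ProbabilityTheory

theorem convolution_cdf_vanishes_for_large_N_general (tlo thi : ℝ) (htlo : 0 ≤ tlo)
    (F : Measure ℝ) [IsProbabilityMeasure F]
    (hsupp : ∀ᵐ θ ∂F, θ ∈ Icc tlo thi)
    (EF : ℝ) (hEF : EF = ∫ θ, θ ∂F)
    (ctilde : ℕ → ℝ)
    (hlimsup_lo : tlo < Filter.limsup ctilde Filter.atTop)
    (hlimsup_hi : Filter.limsup ctilde Filter.atTop < EF)
    (Fconv : ℕ → ℝ → ℝ)
    (hFconv : ∀ N : ℕ, ∀ x : ℝ, Fconv N x =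
      (((Measure.pi (fun _ : Fin (N - 1) => F)).map (fun ω => ∑ i, ω i)) (Iic x)).toReal) :
    ∀ ε : ℝ, 0 < ε → ∃ N₀ : ℕ, ∀ N ≥ N₀,
      (∀ θ ∈ Icc tlo thi,
          Fconv N (N * ctilde N - θ) ≤ Fconv N (N * ctilde N - tlo)) ∧
      Fconv N (N * ctilde N - tlo) < ε := by
  intro ε hε
  have hcdf : ∀ N, Fconv N = cdf (iidSumLaw F (N - 1)) := fun N =>
    funext fun x => by rw [hFconv, cdf_eq_real]; rfl
  obtain ⟨r, hLr, hrE⟩ := exists_between hlimsup_hi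
  obtain ⟨m, hrm, hmE⟩ := exists_between hrE
  have hc : ∀ᶠ N in atTop, ctilde N < r := eventually_lt_of_limsup_lt hLr
    (Real.isBoundedUnder_le_of_limsup_ne_zero (by linarith))
  have hx : ∀ᶠ n : ℕ in atTop, ((n + 1 : ℕ) : ℝ) * ctilde (n + 1) - tlo ≤ n * m := by
    filter_upwards [(tendsto_add_atTop_nat 1).eventually hc,
      tendsto_natCast_atTop_atTop.eventually_ge_atTop ((r - tlo) / (m - r))] with n hcn hn
    rw [div_le_iff₀ (sub_pos.2 hrm)] at hn
    have := mul_le_mul_of_nonneg_left hcn.le (by positivity : (0 : ℝ) ≤ n + 1)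
    push_cast
    linarith
  have hlim : Tendsto (fun N : ℕ => Fconv N (N * ctilde N - tlo)) atTop (𝓝 0) := by
    rw [← tendsto_add_atTop_iff_nat 1]
    simp only [hcdf, Nat.add_sub_cancel]
    exact tendsto_cdf_iidSumLaw (memLp_of_bounded hsupp aestronglyMeasurable_id 2) (hEF ▸ hmE) hx
  obtain ⟨N₀, hN₀⟩ := eventually_atTop.1 ((tendsto_order.1 hlim).2 ε hε)
  refine ⟨N₀, fun N hN => ⟨fun θ hθ => ?_, hN₀ N hN⟩⟩
  rw [hcdf]
  exact (cdf _).mono (by linarith [hθ.1])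

theorem convolution_cdf_vanishes_for_large_N (tlo thi : ℝ) (htlo : 0 ≤ tlo) (hlt : tlo < thi)
    (F : Measure ℝ) [IsProbabilityMeasure F]
    (hsupp : ∀ᵐ θ ∂F, θ ∈ Icc tlo thi)
    (EF : ℝ) (hEF : EF = ∫ θ, θ ∂F)
    (ctilde : ℕ → ℝ)
    (hlimsup_lo : tlo < Filter.limsup ctilde Filter.atTop)
    (hlimsup_hi : Filter.limsup ctilde Filter.atTop < EF)
    (Fconv : ℕ → ℝ → ℝ)
    (hFconv : ∀ N : ℕ, ∀ x : ℝ, Fconv N x =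
      (((Measure.pi (fun _ : Fin (N - 1) => F)).map (fun ω => ∑ i, ω i)) (Iic x)).toReal) :
    ∀ ε : ℝ, 0 < ε → ∃ N₀ : ℕ, ∀ N ≥ N₀,
      (∀ θ ∈ Icc tlo thi,
          Fconv N (N * ctilde N - θ) ≤ Fconv N (N * ctilde N - tlo)) ∧
      Fconv N (N * ctilde N - tlo) < ε :=
  convolution_cdf_vanishes_for_large_N_general tlo thi htlo F hsupp EF hEF ctilde hlimsup_lo
    hlimsup_hi Fconv hFconv
end

section
/- Let u : [1, λ̂] → ℝ be continuous, non-decreasing and concave with u' bounded. Suppose u satisfies the timeline-C individual rationality constraint [(Γ^B(λ) - Γ^C(λ))/M]·u'(λ) - u(λ) ≥ 0 for a.e. λ ∈ [1, λ̂], where Γ^B(λ) - Γ^C(λ) = ((λ-1)/(1+λ))·(λM - m) with m > M·λ̂ > 0. Then u(1) ≤ 0; moreover, if u is not identically constant (i.e., u' > 0 on a set of positive measure near 1), then u(1) < 0. -/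
/-!
On `(1, λ̂)` the coefficient `(Γ^B - Γ^C)/M = ((λ-1)/(1+λ))(λM - m)/M` is nonpositive and `u' ≥ 0`,
so the individual rationality constraint forces `u ≤ 0` almost everywhere. A monotone function that
is a.e. nonpositive is nonpositive at every point left of the right endpoint, in particular at `1`.
If `u 1 = 0`, monotonicity pins `u` to `0` on `(1, λ̂)`, so `u' = 0` there, and the set where
`u' > 0` is empty.
-/

open Set MeasureTheory

theorem gammaB_sub_gammaC_nonpos {m M lam : ℝ} (hlam : 1 ≤ lam) (hlamM : lam * M ≤ m) :
    (2 * m + (1 - lam) * M) / (1 + lam) - (m + (1 - lam) * M) ≤ 0 := by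
  have hpos : 0 < 1 + lam := by linarith
  have hfactor : (2 * m + (1 - lam) * M) / (1 + lam) - (m + (1 - lam) * M)
      = (lam - 1) * (lam * M - m) / (1 + lam) := by
    field_simp
    ring
  rw [hfactor]
  exact div_nonpos_of_nonpos_of_nonneg
    (mul_nonpos_of_nonneg_of_nonpos (by linarith) (by linarith)) hpos.le

theorem MonotoneOn.nonpos_of_ae_nonpos {u : ℝ → ℝ} {a b x : ℝ} (hu : MonotoneOn u (Icc a b))
    (h : ∀ᵐ y ∂volume.restrict (Icc a b), u y ≤ 0) (hx : x ∈ Ico a b) : u x ≤ 0 := by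
  have hsub : Ioo x b ⊆ Icc a b := Ioo_subset_Icc_self.trans (Icc_subset_Icc_left hx.1)
  have hpos : volume (Ioo x b) ≠ 0 := by simp [hx.2]
  obtain ⟨y, hy, huy⟩ :=
    Measure.exists_mem_of_measure_ne_zero_of_ae hpos (ae_restrict_of_ae_restrict_of_subset hsub h)
  exact (hu ⟨hx.1, hx.2.le⟩ (hsub hy) hy.1.le).trans huy

theorem ae_restrict_Icc_mem_Ioo (a b : ℝ) : ∀ᵐ x ∂volume.restrict (Icc a b), x ∈ Ioo a b := by
  rw [← Measure.restrict_congr_set Ioo_ae_eq_Icc]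
  exact ae_restrict_mem measurableSet_Ioo

theorem eq_zero_of_hasDerivAt_of_eqOn_zero {u u' : ℝ → ℝ} {s : Set ℝ} (hs : IsOpen s)
    (hu : EqOn u 0 s) (hderiv : ∀ x ∈ s, HasDerivAt u (u' x) x) {x : ℝ} (hx : x ∈ s) :
    u' x = 0 :=
  (hderiv x hx).unique <|
    (hasDerivAt_const x 0).congr_of_eventuallyEq (Filter.eventually_of_mem (hs.mem_nhds hx) hu)

theorem timelineC_subsidy_negative_general (m M lamHat : ℝ)
    (hM : 0 < M) (hlamHat1 : 1 < lamHat)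
    (hm : M * lamHat < m)
    (GammaB GammaC : ℝ → ℝ)
    (hGB : ∀ lam, GammaB lam = (2 * m + (1 - lam) * M) / (1 + lam))
    (hGC : ∀ lam, GammaC lam = m + (1 - lam) * M)
    (u u' : ℝ → ℝ)
    (hu_mono : MonotoneOn u (Icc 1 lamHat))
    (hu_deriv : ∀ lam ∈ Ioo (1:ℝ) lamHat, HasDerivAt u (u' lam) lam)
    (hu'_nonneg : ∀ lam ∈ Ioo (1:ℝ) lamHat, 0 ≤ u' lam)
    (hIR : ∀ᵐ lam ∂(MeasureTheory.volume.restrict (Icc (1:ℝ) lamHat)),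
      0 ≤ ((GammaB lam - GammaC lam) / M) * u' lam - u lam) :
    u 1 ≤ 0 ∧
      ((∀ ε : ℝ, 0 < ε →
          0 < MeasureTheory.volume {lam ∈ Ioo (1:ℝ) (min (1 + ε) lamHat) | 0 < u' lam})
        → u 1 < 0) := by
  have hu_ae : ∀ᵐ lam ∂volume.restrict (Icc 1 lamHat), u lam ≤ 0 := by
    filter_upwards [hIR, ae_restrict_Icc_mem_Ioo 1 lamHat] with lam hlam hmem
    have hcoef : (GammaB lam - GammaC lam) / M ≤ 0 := by
      rw [hGB, hGC]
      exact div_nonpos_of_nonpos_of_nonneg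
        (gammaB_sub_gammaC_nonpos hmem.1.le (by nlinarith [hmem.2])) hM.le
    nlinarith [mul_nonpos_of_nonpos_of_nonneg hcoef (hu'_nonneg lam hmem)]
  have hu_nonpos : ∀ lam ∈ Ico 1 lamHat, u lam ≤ 0 := fun lam hlam =>
    hu_mono.nonpos_of_ae_nonpos hu_ae hlam
  have hu1 : u 1 ≤ 0 := hu_nonpos 1 ⟨le_rfl, hlamHat1⟩
  refine ⟨hu1, fun hpos => hu1.lt_of_ne fun hu1_eq => ?_⟩
  have hu_zero : EqOn u 0 (Ioo 1 lamHat) := fun lam hlam =>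
    le_antisymm (hu_nonpos lam (Ioo_subset_Ico_self hlam))
      (hu1_eq.symm.le.trans (hu_mono ⟨le_rfl, hlamHat1.le⟩ (Ioo_subset_Icc_self hlam) hlam.1.le))
  have hempty : {lam ∈ Ioo (1:ℝ) (min (1 + 1) lamHat) | 0 < u' lam} = ∅ := by
    refine eq_empty_of_forall_notMem fun lam ⟨hlam, hlam_pos⟩ => hlam_pos.ne' ?_
    exact eq_zero_of_hasDerivAt_of_eqOn_zero isOpen_Ioo hu_zero hu_deriv
      ⟨hlam.1, hlam.2.trans_le (min_le_right _ _)⟩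
  simpa only [hempty, measure_empty, lt_self_iff_false] using hpos 1 one_pos

theorem timelineC_subsidy_negative (m M lamHat : ℝ)
    (hM : 0 < M) (hlamHat1 : 1 < lamHat) (hlamHat2 : lamHat ≤ 2)
    (hm : M * lamHat < m)
    (GammaB GammaC : ℝ → ℝ)
    (hGB : ∀ lam, GammaB lam = (2 * m + (1 - lam) * M) / (1 + lam))
    (hGC : ∀ lam, GammaC lam = m + (1 - lam) * M)
    (u u' : ℝ → ℝ)
    (hu_cont : ContinuousOn u (Icc 1 lamHat))
    (hu_mono : MonotoneOn u (Icc 1 lamHat))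
    (hu_conc : ConcaveOn ℝ (Icc 1 lamHat) u)
    (hu_deriv : ∀ lam ∈ Ioo (1:ℝ) lamHat, HasDerivAt u (u' lam) lam)
    (hu'_bd : ∃ C : ℝ, ∀ lam ∈ Ioo (1:ℝ) lamHat, |u' lam| ≤ C)
    (hu'_nonneg : ∀ lam ∈ Ioo (1:ℝ) lamHat, 0 ≤ u' lam)
    (hIR : ∀ᵐ lam ∂(MeasureTheory.volume.restrict (Icc (1:ℝ) lamHat)),
      0 ≤ ((GammaB lam - GammaC lam) / M) * u' lam - u lam) :
    u 1 ≤ 0 ∧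
      ((∀ ε : ℝ, 0 < ε →
          0 < MeasureTheory.volume {lam ∈ Ioo (1:ℝ) (min (1 + ε) lamHat) | 0 < u' lam})
        → u 1 < 0) :=
  timelineC_subsidy_negative_general m M lamHat hM hlamHat1 hm GammaB GammaC hGB hGC u u' hu_mono
    hu_deriv hu'_nonneg hIR
end
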